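/- Monotonicity of sum on passable games: let G, G' be games over a poset A and let H be a passable game over a poset B. Then (a) G ◁ G' implies G + H ◁ G' + H, and (b) G ≤ G' implies G + H ≤ G' + H, where the sum G + H is a game over A × B (with the product order). -/
import Mathlib


inductive Game (A : Type) : Type 1 where
  | atom : A → Game A
  | comp : (ι κ : Type) → (ι → Game A) → (κ → Game A) → Nonempty ι → Nonempty κ → Game A

namespace Game

variable {A : Type}

/-- `G.IsAtom` holds iff `G` is an atomic game. -/
def IsAtom : Game A → Prop
  | atom _ => True
  | comp _ _ _ _ _ _ => False

/-- `G.IsLeftOption x`: `x` is a left option of `G`. -/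
def IsLeftOption : Game A → Game A → Prop
  | atom _, _ => False
  | comp _ _ L _ _ _, x => ∃ i, L i = x

/-- `G.IsRightOption y`: `y` is a right option of `G`. -/
def IsRightOption : Game A → Game A → Prop
  | atom _, _ => False
  | comp _ _ _ R _ _, x => ∃ j, R j = x

section Ord

variable [PartialOrder A]

mutual
  /-- The order relation `G ≤ H` on games over a poset. -/
  inductive Le : Game A → Game A → Prop
    | mk : ∀ {G H : Game A},
        (∀ x, G.IsLeftOption x → Tri x H) →
        (∀ y, H.IsRightOption y → Tri G y) →
        ((G.IsAtom ∨ H.IsAtom) → Tri G H) →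
        Le G H
  /-- The relation `G ◁ H` on games over a poset. -/
  inductive Tri : Game A → Game A → Prop
    | ofRight : ∀ {G H y : Game A}, G.IsRightOption y → Le y H → Tri G H
    | ofLeft : ∀ {G H x : Game A}, H.IsLeftOption x → Le G x → Tri G H
    | ofAtom : ∀ {a b : A}, a ≤ b → Tri (Game.atom a) (Game.atom b)
end

/-- Equivalence of games: `G ≤ H` and `H ≤ G`. -/
def Equiv (G H : Game A) : Prop := Le G H ∧ Le H G

/-- A game is monotone if all of its options are good, and recursively all
options are monotone. -/
inductive Monotone : Game A → Prop
  | mk : ∀ {G : Game A},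
      (∀ x, G.IsLeftOption x → Le G x) →
      (∀ y, G.IsRightOption y → Le y G) →
      (∀ x, G.IsLeftOption x → Monotone x) →
      (∀ y, G.IsRightOption y → Monotone y) →
      Monotone G

/-- A game is passable if `G ◁ G` and recursively all options are passable. -/
inductive Passable : Game A → Prop
  | mk : ∀ {G : Game A}, Tri G G →
      (∀ x, G.IsLeftOption x → Passable x) →
      (∀ y, G.IsRightOption y → Passable y) →
      Passable G

end Ord

end Game

/-- The sum of a game over `A` and a game over `B`, a game over `A × B`:
`[a] + [b] = [(a,b)]`, and if at least one summand is composite,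
`G + H = ⟨G^L + H, G + H^L | G^R + H, G + H^R⟩`. -/
noncomputable def Game.sum {A B : Type} : Game A → Game B → Game (A × B) :=
  fun G =>
    Game.rec (motive := fun _ => Game B → Game (A × B))
      (fun a =>
        Game.rec (motive := fun _ => Game (A × B))
          (fun b => Game.atom (a, b))
          (fun ι κ _ _ hι hκ ihL ihR => Game.comp ι κ ihL ihR hι hκ))
      (fun ι κ _ _ hι hκ ihL ihR H =>
        Game.rec (motive := fun _ => Game (A × B))
          (fun b =>
            Game.comp ι κ (fun i => ihL i (Game.atom b))
              (fun j => ihR j (Game.atom b)) hι hκ)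
          (fun ι' κ' L' R' hι' hκ' ihL' ihR' =>
            Game.comp (ι ⊕ ι') (κ ⊕ κ')
              (Sum.elim (fun i => ihL i (Game.comp ι' κ' L' R' hι' hκ')) ihL')
              (Sum.elim (fun j => ihR j (Game.comp ι' κ' L' R' hι' hκ')) ihR')
              (hι.map Sum.inl) (hκ.map Sum.inl))
          H)
      G


namespace Game

variable {A B : Type}

theorem sum_atom_atom (a : A) (b : B) : (atom a).sum (atom b) = atom (a, b) := rfl

theorem sum_atom_comp (a : A) {ι κ : Type} (L : ι → Game B) (R : κ → Game B)
    (hι : Nonempty ι) (hκ : Nonempty κ) :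
    (atom a).sum (comp ι κ L R hι hκ) =
      comp ι κ (fun i => (atom a).sum (L i)) (fun j => (atom a).sum (R j)) hι hκ := rfl

theorem sum_comp_atom {ι κ : Type} (L : ι → Game A) (R : κ → Game A)
    (hι : Nonempty ι) (hκ : Nonempty κ) (b : B) :
    (comp ι κ L R hι hκ).sum (atom b) =
      comp ι κ (fun i => (L i).sum (atom b)) (fun j => (R j).sum (atom b)) hι hκ := rfl

theorem sum_comp_comp {ι κ ι' κ' : Type} (L : ι → Game A) (R : κ → Game A)
    (hι : Nonempty ι) (hκ : Nonempty κ) (L' : ι' → Game B) (R' : κ' → Game B)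
    (hι' : Nonempty ι') (hκ' : Nonempty κ') :
    (comp ι κ L R hι hκ).sum (comp ι' κ' L' R' hι' hκ') =
      comp (ι ⊕ ι') (κ ⊕ κ')
        (Sum.elim (fun i => (L i).sum (comp ι' κ' L' R' hι' hκ'))
          (fun i' => (comp ι κ L R hι hκ).sum (L' i')))
        (Sum.elim (fun j => (R j).sum (comp ι' κ' L' R' hι' hκ'))
          (fun j' => (comp ι κ L R hι hκ).sum (R' j')))
        (hι.map Sum.inl) (hκ.map Sum.inl) := rfl

theorem isAtom_sum {G : Game A} {H : Game B} :
    (G.sum H).IsAtom ↔ G.IsAtom ∧ H.IsAtom := by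
  cases G <;> cases H <;>
    simp [sum_atom_atom, sum_atom_comp, sum_comp_atom, sum_comp_comp, IsAtom]

theorem isLeftOption_sum {G : Game A} {H : Game B} {x : Game (A × B)} :
    (G.sum H).IsLeftOption x ↔
      (∃ g, G.IsLeftOption g ∧ x = g.sum H) ∨ (∃ h, H.IsLeftOption h ∧ x = G.sum h) := by
  cases G with
  | atom a =>
    cases H with
    | atom b => simp [sum_atom_atom, IsLeftOption]
    | comp ι' κ' L' R' hι' hκ' =>
      rw [sum_atom_comp]
      show (∃ i, (atom a).sum (L' i) = x) ↔ _
      constructor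
      · rintro ⟨i, rfl⟩
        exact Or.inr ⟨L' i, ⟨i, rfl⟩, rfl⟩
      · rintro (⟨g, hg, _⟩ | ⟨h, ⟨i, rfl⟩, rfl⟩)
        · exact hg.elim
        · exact ⟨i, rfl⟩
  | comp ι κ L R hι hκ =>
    cases H with
    | atom b =>
      rw [sum_comp_atom]
      show (∃ i, (L i).sum (atom b) = x) ↔ _
      constructor
      · rintro ⟨i, rfl⟩
        exact Or.inl ⟨L i, ⟨i, rfl⟩, rfl⟩
      · rintro (⟨g, ⟨i, rfl⟩, rfl⟩ | ⟨h, hh, _⟩)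
        · exact ⟨i, rfl⟩
        · exact hh.elim
    | comp ι' κ' L' R' hι' hκ' =>
      rw [sum_comp_comp]
      show (∃ i : ι ⊕ ι', Sum.elim _ _ i = x) ↔ _
      constructor
      · rintro ⟨i | i', rfl⟩
        · exact Or.inl ⟨L i, ⟨i, rfl⟩, rfl⟩
        · exact Or.inr ⟨L' i', ⟨i', rfl⟩, rfl⟩
      · rintro (⟨g, ⟨i, rfl⟩, rfl⟩ | ⟨h, ⟨i', rfl⟩, rfl⟩)
        · exact ⟨Sum.inl i, rfl⟩
        · exact ⟨Sum.inr i', rfl⟩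

theorem isRightOption_sum {G : Game A} {H : Game B} {x : Game (A × B)} :
    (G.sum H).IsRightOption x ↔
      (∃ g, G.IsRightOption g ∧ x = g.sum H) ∨ (∃ h, H.IsRightOption h ∧ x = G.sum h) := by
  cases G with
  | atom a =>
    cases H with
    | atom b => simp [sum_atom_atom, IsRightOption]
    | comp ι' κ' L' R' hι' hκ' =>
      rw [sum_atom_comp]
      show (∃ j, (atom a).sum (R' j) = x) ↔ _
      constructor
      · rintro ⟨j, rfl⟩
        exact Or.inr ⟨R' j, ⟨j, rfl⟩, rfl⟩
      · rintro (⟨g, hg, _⟩ | ⟨h, ⟨j, rfl⟩, rfl⟩)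
        · exact hg.elim
        · exact ⟨j, rfl⟩
  | comp ι κ L R hι hκ =>
    cases H with
    | atom b =>
      rw [sum_comp_atom]
      show (∃ j, (R j).sum (atom b) = x) ↔ _
      constructor
      · rintro ⟨j, rfl⟩
        exact Or.inl ⟨R j, ⟨j, rfl⟩, rfl⟩
      · rintro (⟨g, ⟨j, rfl⟩, rfl⟩ | ⟨h, hh, _⟩)
        · exact ⟨j, rfl⟩
        · exact hh.elim
    | comp ι' κ' L' R' hι' hκ' =>
      rw [sum_comp_comp]
      show (∃ j : κ ⊕ κ', Sum.elim _ _ j = x) ↔ _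
      constructor
      · rintro ⟨j | j', rfl⟩
        · exact Or.inl ⟨R j, ⟨j, rfl⟩, rfl⟩
        · exact Or.inr ⟨R' j', ⟨j', rfl⟩, rfl⟩
      · rintro (⟨g, ⟨j, rfl⟩, rfl⟩ | ⟨h, ⟨j', rfl⟩, rfl⟩)
        · exact ⟨Sum.inl j, rfl⟩
        · exact ⟨Sum.inr j', rfl⟩

section Mono

variable [PartialOrder A] [PartialOrder B]

theorem atom_step {a a' : A} (haa : a ≤ a') (K H : Game B)
    (IHK : ∀ k, K.IsLeftOption k ∨ K.IsRightOption k →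
      (Tri k H → Tri ((atom a).sum k) ((atom a').sum H)) ∧
      (Le k H → Le ((atom a).sum k) ((atom a').sum H)))
    (IHH : ∀ h, H.IsLeftOption h ∨ H.IsRightOption h →
      (Tri K h → Tri ((atom a).sum K) ((atom a').sum h)) ∧
      (Le K h → Le ((atom a).sum K) ((atom a').sum h))) :
    (Tri K H → Tri ((atom a).sum K) ((atom a').sum H)) ∧
    (Le K H → Le ((atom a).sum K) ((atom a').sum H)) := by
  have tripart : Tri K H → Tri ((atom a).sum K) ((atom a').sum H) := by
    intro t
    cases t with
    | ofRight hy hle =>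
      exact Tri.ofRight (isRightOption_sum.mpr (Or.inr ⟨_, hy, rfl⟩))
        ((IHK _ (Or.inr hy)).2 hle)
    | ofLeft hx hlx =>
      exact Tri.ofLeft (isLeftOption_sum.mpr (Or.inr ⟨_, hx, rfl⟩))
        ((IHH _ (Or.inl hx)).2 hlx)
    | ofAtom hbb =>
      exact Tri.ofAtom ⟨haa, hbb⟩
  refine ⟨tripart, fun l => ?_⟩
  have l0 := l
  cases l with
  | mk hGL hGR hAt =>
    refine Le.mk ?_ ?_ ?_
    · intro x hx
      rcases isLeftOption_sum.mp hx with ⟨g, hg, rfl⟩ | ⟨k, hk, rfl⟩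
      · exact hg.elim
      · exact (IHK k (Or.inl hk)).1 (hGL k hk)
    · intro y hy
      rcases isRightOption_sum.mp hy with ⟨g, hg, rfl⟩ | ⟨h, hh, rfl⟩
      · exact hg.elim
      · exact (IHH h (Or.inr hh)).1 (hGR h hh)
    · intro hat
      apply tripart
      apply hAt
      rcases hat with h1 | h1
      · exact Or.inl (isAtom_sum.mp h1).2
      · exact Or.inr (isAtom_sum.mp h1).2

theorem atom_sum_mono {a a' : A} (haa : a ≤ a') :
    ∀ K H : Game B,
      (Tri K H → Tri ((atom a).sum K) ((atom a').sum H)) ∧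
      (Le K H → Le ((atom a).sum K) ((atom a').sum H)) := by
  intro K
  induction K with
  | atom b =>
    intro H
    induction H with
    | atom b' =>
      refine atom_step haa _ _ ?_ ?_ <;>
        · rintro k (hk | hk) <;> exact hk.elim
    | comp ι' κ' L' R' hι' hκ' ihL' ihR' =>
      refine atom_step haa _ _ ?_ ?_
      · rintro k (hk | hk) <;> exact hk.elim
      · rintro h (⟨i, rfl⟩ | ⟨j, rfl⟩)
        · exact ihL' i
        · exact ihR' j
  | comp ι κ L R hι hκ ihL ihR =>
    intro H
    induction H with
    | atom b' =>
      refine atom_step haa _ _ ?_ ?_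
      · rintro k (⟨i, rfl⟩ | ⟨j, rfl⟩)
        · exact ihL i _
        · exact ihR j _
      · rintro h (hh | hh) <;> exact hh.elim
    | comp ι' κ' L' R' hι' hκ' ihL' ihR' =>
      refine atom_step haa _ _ ?_ ?_
      · rintro k (⟨i, rfl⟩ | ⟨j, rfl⟩)
        · exact ihL i _
        · exact ihR j _
      · rintro h (⟨i, rfl⟩ | ⟨j, rfl⟩)
        · exact ihL' i
        · exact ihR' j

theorem main_step (G G' : Game A) (H : Game B) (hH : Passable H)
    (IHG : ∀ g, G.IsLeftOption g ∨ G.IsRightOption g →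
      (Tri g G' → Tri (g.sum H) (G'.sum H)) ∧ (Le g G' → Le (g.sum H) (G'.sum H)))
    (IHG' : ∀ g', G'.IsLeftOption g' ∨ G'.IsRightOption g' →
      (Tri G g' → Tri (G.sum H) (g'.sum H)) ∧ (Le G g' → Le (G.sum H) (g'.sum H)))
    (IHH : ∀ h, H.IsLeftOption h ∨ H.IsRightOption h →
      (Tri G G' → Tri (G.sum h) (G'.sum h)) ∧ (Le G G' → Le (G.sum h) (G'.sum h))) :
    (Tri G G' → Tri (G.sum H) (G'.sum H)) ∧ (Le G G' → Le (G.sum H) (G'.sum H)) := by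
  have tripart : Tri G G' → Tri (G.sum H) (G'.sum H) := by
    intro t
    cases t with
    | ofRight hy hle =>
      exact Tri.ofRight (isRightOption_sum.mpr (Or.inl ⟨_, hy, rfl⟩))
        ((IHG _ (Or.inr hy)).2 hle)
    | ofLeft hx hlx =>
      exact Tri.ofLeft (isLeftOption_sum.mpr (Or.inl ⟨_, hx, rfl⟩))
        ((IHG' _ (Or.inl hx)).2 hlx)
    | ofAtom hab =>
      cases hH with
      | mk triH hpL hpR =>
        cases triH with
        | ofRight hy hle =>
          exact Tri.ofRight (isRightOption_sum.mpr (Or.inr ⟨_, hy, rfl⟩))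
            ((atom_sum_mono hab _ _).2 hle)
        | ofLeft hx hlx =>
          exact Tri.ofLeft (isLeftOption_sum.mpr (Or.inr ⟨_, hx, rfl⟩))
            ((atom_sum_mono hab _ _).2 hlx)
        | ofAtom hbb =>
          exact Tri.ofAtom ⟨hab, hbb⟩
  refine ⟨tripart, fun l => ?_⟩
  have l0 := l
  cases l with
  | mk hGL hGR hAt =>
    refine Le.mk ?_ ?_ ?_
    · intro x hx
      rcases isLeftOption_sum.mp hx with ⟨g, hg, rfl⟩ | ⟨h, hh, rfl⟩
      · exact (IHG g (Or.inl hg)).1 (hGL g hg)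
      · exact Tri.ofLeft (isLeftOption_sum.mpr (Or.inr ⟨h, hh, rfl⟩))
          ((IHH h (Or.inl hh)).2 l0)
    · intro y hy
      rcases isRightOption_sum.mp hy with ⟨g', hg', rfl⟩ | ⟨h, hh, rfl⟩
      · exact (IHG' g' (Or.inr hg')).1 (hGR g' hg')
      · exact Tri.ofRight (isRightOption_sum.mpr (Or.inr ⟨h, hh, rfl⟩))
          ((IHH h (Or.inr hh)).2 l0)
    · intro hat
      apply tripart
      apply hAt
      rcases hat with h1 | h1
      · exact Or.inl (isAtom_sum.mp h1).1
      · exact Or.inr (isAtom_sum.mp h1).1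

end Mono

end Game

/-- Monotonicity of sum on passable games: for `G, G'` over `A` and `H` a
passable game over `B`, (a) `G ◁ G'` implies `G + H ◁ G' + H` and
(b) `G ≤ G'` implies `G + H ≤ G' + H`, where `G + H` is a game over `A × B`
with the product order. -/
theorem Game.sum_monotone {A B : Type} [PartialOrder A] [PartialOrder B]
    (G G' : Game A) (H : Game B) (hH : H.Passable) :
    (Game.Tri G G' → Game.Tri (G.sum H) (G'.sum H)) ∧
    (Game.Le G G' → Game.Le (G.sum H) (G'.sum H)) := by
  suffices h : ∀ (G G' : Game A) (H : Game B), H.Passable →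
      (Game.Tri G G' → Game.Tri (G.sum H) (G'.sum H)) ∧
      (Game.Le G G' → Game.Le (G.sum H) (G'.sum H)) from h G G' H hH
  clear hH G G' H
  intro G
  induction G with
  | atom a =>
    intro G'
    induction G' with
    | atom a' =>
      intro H hH
      induction hH with
      | mk triH hpL hpR ihpL ihpR =>
        refine Game.main_step _ _ _ (Game.Passable.mk triH hpL hpR) ?_ ?_ ?_
        · rintro g (hg | hg) <;> exact hg.elim
        · rintro g (hg | hg) <;> exact hg.elim
        · rintro h (hh | hh)
          · exact ihpL h hh
          · exact ihpR h hh
    | comp ι' κ' L' R' hι' hκ' ihL' ihR' =>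
      intro H hH
      induction hH with
      | mk triH hpL hpR ihpL ihpR =>
        refine Game.main_step _ _ _ (Game.Passable.mk triH hpL hpR) ?_ ?_ ?_
        · rintro g (hg | hg) <;> exact hg.elim
        · rintro g' (⟨i, rfl⟩ | ⟨j, rfl⟩)
          · exact ihL' i _ (Game.Passable.mk triH hpL hpR)
          · exact ihR' j _ (Game.Passable.mk triH hpL hpR)
        · rintro h (hh | hh)
          · exact ihpL h hh
          · exact ihpR h hh
  | comp ι κ L R hι hκ ihL ihR =>
    intro G'
    induction G' with
    | atom a' =>
      intro H hH
      induction hH with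
      | mk triH hpL hpR ihpL ihpR =>
        refine Game.main_step _ _ _ (Game.Passable.mk triH hpL hpR) ?_ ?_ ?_
        · rintro g (⟨i, rfl⟩ | ⟨j, rfl⟩)
          · exact ihL i _ _ (Game.Passable.mk triH hpL hpR)
          · exact ihR j _ _ (Game.Passable.mk triH hpL hpR)
        · rintro g (hg | hg) <;> exact hg.elim
        · rintro h (hh | hh)
          · exact ihpL h hh
          · exact ihpR h hh
    | comp ι' κ' L' R' hι' hκ' ihL' ihR' =>
      intro H hH
      induction hH with
      | mk triH hpL hpR ihpL ihpR =>
        refine Game.main_step _ _ _ (Game.Passable.mk triH hpL hpR) ?_ ?_ ?_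
        · rintro g (⟨i, rfl⟩ | ⟨j, rfl⟩)
          · exact ihL i _ _ (Game.Passable.mk triH hpL hpR)
          · exact ihR j _ _ (Game.Passable.mk triH hpL hpR)
        · rintro g' (⟨i, rfl⟩ | ⟨j, rfl⟩)
          · exact ihL' i _ (Game.Passable.mk triH hpL hpR)
          · exact ihR' j _ (Game.Passable.mk triH hpL hpR)
        · rintro h (hh | hh)
          · exact ihpL h hh
          · exact ihpR h hh
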